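/- arXiv:math/0502402 — 7 statements merged into one kernel-verified Lean document; each statement's English description precedes it below -/
import Mathlib

section
/- If f : X → Y is a homotopy equivalence with f(p) = q, then the induced map f* : π₁(X,p) → π₁(Y,q) of topological fundamental groups is both a group isomorphism and a homeomorphism. -/
open unitInterval Topology

noncomputable section

/-- The topological fundamental group: path components of the based loop space
(compact-open topology), with the quotient topology. -/
def piTop (Z : Type*) [TopologicalSpace Z] (z : Z) : Type _ :=
  Quotient (pathSetoid (Path z z))

instance (Z : Type*) [TopologicalSpace Z] (z : Z) : TopologicalSpace (piTop Z z) :=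
  instTopologicalSpaceQuotient

/-- The class of a loop in the topological fundamental group. -/
def piMk {Z : Type*} [TopologicalSpace Z] {z : Z} (γ : Path z z) : piTop Z z :=
  Quotient.mk _ γ

/-!
The induced map `f_*` comes from the continuous map `a ↦ f ∘ a` of loop spaces; as continuous
maps preserve path components, it descends to `π₁`. Its inverse comes in the same way from the
continuous map `b ↦ γ⁻¹ · (g ∘ b) · γ`, where `g` is a homotopy inverse and `γ` the track of `p`
under a homotopy `g ∘ f ≃ id`: naturality of that homotopy gives `γ⁻¹ · (g ∘ f ∘ a) · γ ≃ a`.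
So `f_*` has a continuous left inverse, and it is surjective because a homotopy equivalence
induces an equivalence, hence a full functor, of fundamental groupoids. Homotopic loops lie in
one path component of the loop space, which transfers these statements to `π₁`.
-/

namespace Path

variable {X Y : Type*} [TopologicalSpace X] [TopologicalSpace Y]

theorem continuous_map {x y : X} {f : X → Y} (hf : Continuous f) :
    Continuous fun γ : Path x y => γ.map hf :=
  continuous_uncurry_iff.mp <| hf.comp (continuous_fst.eval continuous_snd)

theorem Homotopic.joined {x y : X} {γ γ' : Path x y} (h : γ.Homotopic γ') : Joined γ γ' := by
  obtain ⟨F⟩ := h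
  exact ⟨⟨⟨F.eval, continuous_uncurry_iff.mp F.continuous⟩, F.eval_zero, F.eval_one⟩⟩

theorem Homotopic.symm_evalAt_trans_map_trans_evalAt {φ ψ : C(X, Y)} (H : φ.Homotopy ψ)
    {x₀ x₁ : X} (γ : Path x₀ x₁) :
    ((H.evalAt x₀).symm.trans ((γ.map φ.continuous).trans (H.evalAt x₁))).Homotopic
      (γ.map ψ.continuous) := by
  rw [← Homotopic.Quotient.eq]
  have naturality := Homotopic.Quotient.eq.mpr (Homotopic.map_trans_evalAt H γ)
  simp only [Homotopic.Quotient.mk_trans, Homotopic.Quotient.mk_symm] at naturality ⊢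
  rw [naturality, ← Homotopic.Quotient.trans_assoc, Homotopic.Quotient.symm_trans,
    Homotopic.Quotient.refl_trans]

theorem exists_map_homotopic_of_homotopyEquiv (h : ContinuousMap.HomotopyEquiv X Y)
    {x₀ x₁ : X} (γ : Path (h x₀) (h x₁)) :
    ∃ δ : Path x₀ x₁, (δ.map h.toFun.continuous).Homotopic γ := by
  have full := (FundamentalGroupoidFunctor.equivOfHomotopyEquiv h).functor.map_surjective
    (X := ⟨x₀⟩) (Y := ⟨x₁⟩)
  obtain ⟨δ, hδ⟩ := full (Homotopic.Quotient.mk γ)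
  induction δ using Homotopic.Quotient.ind with | mk δ =>
  exact ⟨δ, Homotopic.Quotient.exact hδ⟩

end Path

theorem piMk_eq_piMk_of_homotopic {X : Type*} [TopologicalSpace X] {x : X} {γ γ' : Path x x}
    (h : γ.Homotopic γ') : piMk γ = piMk γ' :=
  Quotient.sound h.joined

def piTop.ofLoopMap {X Y : Type*} [TopologicalSpace X] [TopologicalSpace Y] {x : X} {y : Y}
    (Φ : Path x x → Path y y) (hΦ : Continuous Φ) : C(piTop X x, piTop Y y) :=
  ⟨Quotient.map Φ fun _ _ h => h.map hΦ, hΦ.quotient_map' _⟩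

/-- a homotopy equivalence `f : X → Y` with `f p = q` induces a map
`f* : π₁(X,p) → π₁(Y,q)` of topological fundamental groups that is both a group
isomorphism (it is bijective and preserves concatenation) and a homeomorphism. -/
theorem homotopy_equivalence_induces_homeo_iso
    (X Y : Type*) [TopologicalSpace X] [TopologicalSpace Y]
    (h : ContinuousMap.HomotopyEquiv X Y) (p : X) (q : Y) (hq : h.toFun p = q) :
    ∃ φ : piTop X p ≃ₜ piTop Y q,
      (∀ a : Path p p,
        φ (piMk a) = piMk ((a.map h.toFun.continuous).cast hq.symm hq.symm)) ∧
      (∀ a b : Path p p,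
        φ (piMk (a.trans b)) =
          piMk (((a.map h.toFun.continuous).cast hq.symm hq.symm).trans
            ((b.map h.toFun.continuous).cast hq.symm hq.symm))) := by
  subst hq
  obtain ⟨H⟩ := h.left_inv
  set γ := H.evalAt p
  let F := piTop.ofLoopMap (fun a : Path p p => a.map h.toFun.continuous)
    (Path.continuous_map _)
  let G : C(piTop Y (h.toFun p), piTop X p) :=
    piTop.ofLoopMap (fun b => γ.symm.trans ((b.map h.invFun.continuous).trans γ))
      (continuous_const.path_trans ((Path.continuous_map _).path_trans continuous_const))
  have hGF : Function.LeftInverse G F := Quotient.ind fun a => by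
    refine piMk_eq_piMk_of_homotopic ?_
    have key := Path.Homotopic.symm_evalAt_trans_map_trans_evalAt H a
    have map_comp : (a.map h.toFun.continuous).map h.invFun.continuous =
        a.map (h.invFun.comp h.toFun).continuous := Path.map_map _ _ _
    have map_id : a.map (ContinuousMap.id X).continuous = a := Path.map_id a
    rwa [map_id, ← map_comp] at key
  have hF : Function.Surjective F := Quotient.ind fun b => by
    obtain ⟨a, ha⟩ := Path.exists_map_homotopic_of_homotopyEquiv h b
    exact ⟨piMk a, piMk_eq_piMk_of_homotopic ha⟩
  exact ⟨⟨⟨F, G, hGF, hGF.rightInverse_of_surjective hF⟩, F.continuous, G.continuous⟩,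
    fun a => rfl, fun a b => congrArg piMk (Path.map_trans a b _)⟩
end
end

section
/- If X is locally contractible, then the topological fundamental group π₁(X,p) is discrete for every p ∈ X. -/
/-
Local contractibility yields local path-connectedness and, around every point, a neighbourhood
in which any two paths with common endpoints are homotopic in `X`. Cover a path `γ` by finitely
many such open sets `U k` along a subdivision `t 0 ≤ ⋯ ≤ t n` of `[0, 1]`. If a path `η` maps each
`[t k, t (k + 1)]` into `U k` and each `η (t k)` lies in the path component of `γ (t k)` in
`U (k - 1) ∩ U k`, then paths `r k` joining the nodes cut the region between `γ` and `η` into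
squares, each inside a single `U k` and hence null-homotopic; so `η` is homotopic to `γ`. These
conditions define an open neighbourhood of `γ` in the compact-open topology, so the path
components of the loop space are open and `π₁` is discrete.
-/

open unitInterval Topology

noncomputable section

/-- `Z` is locally contractible: every neighborhood `U` of every point contains a
neighborhood `V` such that the inclusion `V ↪ U` is null-homotopic. -/
def LocallyContractible (Z : Type*) [TopologicalSpace Z] : Prop :=
  ∀ x : Z, ∀ U ∈ 𝓝 x, ∃ V ∈ 𝓝 x, ∃ h : V ⊆ U, ∃ c : ↥U,
    (⟨Set.inclusion h, continuous_inclusion h⟩ : C(↥V, ↥U)).Homotopic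
      (ContinuousMap.const ↥V c)

open Set Filter

section

variable {X : Type*} [TopologicalSpace X]

def IsRelSimplyConnected (V : Set X) : Prop :=
  ∀ ⦃x y : X⦄ (q q' : Path x y), range q ⊆ V → range q' ⊆ V → q.Homotopic q'

namespace IsRelSimplyConnected

variable {V : Set X}

theorem mono {W : Set X} (hV : IsRelSimplyConnected V) (hWV : W ⊆ V) :
    IsRelSimplyConnected W :=
  fun _ _ q q' hq hq' => hV q q' (hq.trans hWV) (hq'.trans hWV)

theorem homotopic_refl (hV : IsRelSimplyConnected V) {x : X} (q : Path x x)
    (hq : range q ⊆ V) : q.Homotopic (Path.refl x) :=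
  hV q _ hq (by simpa [Path.refl_range] using hq ⟨0, q.source⟩)

end IsRelSimplyConnected

namespace Path

variable {a b : X}

def codRestrict {V : Set X} (γ : Path a b) (hγ : range γ ⊆ V) :
    Path (⟨a, hγ ⟨0, γ.source⟩⟩ : V) ⟨b, hγ ⟨1, γ.target⟩⟩ where
  toFun s := ⟨γ s, hγ ⟨s, rfl⟩⟩
  source' := Subtype.ext γ.source
  target' := Subtype.ext γ.target

theorem Homotopic.congr_coe {a' b' : X} {p q : Path a b} {p' q' : Path a' b'}
    (h : p.Homotopic q) (hp : ⇑p = ⇑p') (hq : ⇑q = ⇑q') : p'.Homotopic q' := by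
  obtain rfl : a = a' := by rw [← p.source, ← p'.source, hp]
  obtain rfl : b = b' := by rw [← p.target, ← p'.target, hp]
  rwa [← Path.ext hp, ← Path.ext hq]

theorem Homotopic.joined_s4 {p q : Path a b} (h : p.Homotopic q) : Joined p q := by
  obtain ⟨F⟩ := h
  exact ⟨⟨⟨F.eval, continuous_uncurry_iff.mp F.continuous⟩, F.eval_zero, F.eval_one⟩⟩

theorem Homotopic.of_trans_right {c : X} {p q : Path a b} (r : Path b c)
    (h : (p.trans r).Homotopic (q.trans r)) : p.Homotopic q := by
  rw [← Quotient.eq] at h ⊢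
  simpa [Quotient.mk_trans] using congrArg (·.trans (Quotient.mk r).symm) h

theorem Homotopic.map_of_homotopic_const {Y : Type*} [TopologicalSpace Y] {f : C(Y, X)} {c : X}
    (hf : f.Homotopic (ContinuousMap.const Y c)) {y y' : Y} (q q' : Path y y') :
    (q.map f.continuous).Homotopic (q'.map f.continuous) := by
  obtain ⟨F⟩ := hf
  exact of_trans_right _ ((map_trans_evalAt F q).trans (map_trans_evalAt F q').symm)

theorem isOpen_setOf_mapsTo {K : Set I} {U : Set X} (hK : IsCompact K) (hU : IsOpen U) :
    IsOpen {γ : Path a b | MapsTo γ K U} :=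
  (ContinuousMap.isOpen_setOfPred_mapsTo hK hU).preimage continuous_induced_dom

theorem Homotopic.subpath_trans_of_squares {a' b' : X} {γ : Path a b} {η : Path a' b'}
    (t : ℕ → I) (r : ∀ k, Path (γ (t k)) (η (t k))) (n : ℕ)
    (hsq : ∀ k < n, ((γ.subpath (t k) (t (k + 1))).trans (r (k + 1))).Homotopic
      ((r k).trans (η.subpath (t k) (t (k + 1))))) :
    ((γ.subpath (t 0) (t n)).trans (r n)).Homotopic ((r 0).trans (η.subpath (t 0) (t n))) := by
  have subpath_trans {x y : X} (δ : Path x y) (u v w : I) :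
      Quotient.mk ((δ.subpath u v).trans (δ.subpath v w)) = Quotient.mk (δ.subpath u w) :=
    Quotient.eq.2 ⟨Homotopy.subpathTransSubpath δ u v w⟩
  simp only [← Quotient.eq, Quotient.mk_trans] at hsq ⊢
  induction n with
  | zero => simp [subpath_self, Quotient.mk_refl]
  | succ n ih =>
    rw [← subpath_trans γ _ (t n), ← subpath_trans η _ (t n), Quotient.mk_trans,
      Quotient.mk_trans, Quotient.trans_assoc, hsq n n.lt_succ_self, ← Quotient.trans_assoc,
      ih fun k hk => hsq k (hk.trans n.lt_succ_self), Quotient.trans_assoc]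

theorem Homotopic.of_subpath_trans {γ η : Path a b} {V W : Set X}
    (hV : IsRelSimplyConnected V) (hW : IsRelSimplyConnected W) {u v : I} (hu : u = 0) (hv : v = 1)
    (r₀ : Path (γ u) (η u)) (r₁ : Path (γ v) (η v)) (hr₀ : range r₀ ⊆ V) (hr₁ : range r₁ ⊆ W)
    (h : ((γ.subpath u v).trans r₁).Homotopic (r₀.trans (η.subpath u v))) :
    γ.Homotopic η := by
  subst hu hv
  set r₀' : Path a a := r₀.cast γ.source.symm η.source.symm
  set r₁' : Path b b := r₁.cast γ.target.symm η.target.symm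
  have h' : (γ.trans r₁').Homotopic (r₀'.trans η) :=
    h.congr_coe (by rw [subpath_zero_one]; rfl) (by rw [subpath_zero_one]; rfl)
  rw [← Quotient.eq] at h' ⊢
  simpa [Quotient.mk_trans, Quotient.eq.2 (hV.homotopic_refl r₀' hr₀),
    Quotient.eq.2 (hW.homotopic_refl r₁' hr₁)] using h'

theorem Homotopic.of_subdivision {γ η : Path a b} {t : ℕ → I} {n : ℕ} {U : ℕ → Set X}
    (ht_mono : Monotone t) (ht0 : t 0 = 0) (htn : t n = 1)
    (hU : ∀ k, IsRelSimplyConnected (U k))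
    (hγ : ∀ k < n, MapsTo γ (Icc (t k) (t (k + 1))) (U k))
    (hη : ∀ k < n, MapsTo η (Icc (t k) (t (k + 1))) (U k))
    (h_node : ∀ k, η (t k) ∈ pathComponentIn (U (k - 1) ∩ U k) (γ (t k))) :
    γ.Homotopic η := by
  choose r hr using h_node
  have hr_range (k : ℕ) : range (r k) ⊆ U (k - 1) ∩ U k := range_subset_iff.2 (hr k)
  have hsq : ∀ k < n, ((γ.subpath (t k) (t (k + 1))).trans (r (k + 1))).Homotopic
      ((r k).trans (η.subpath (t k) (t (k + 1)))) := by
    intro k hk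
    refine hU k _ _ ?_ ?_ <;> rw [trans_range, range_subpath_of_le _ _ _ (ht_mono k.le_succ)]
    · exact union_subset (hγ k hk).image_subset ((hr_range (k + 1)).trans inter_subset_left)
    · exact union_subset ((hr_range k).trans inter_subset_right) (hη k hk).image_subset
  exact Homotopic.of_subpath_trans (hU 0) (hU n) ht0 htn (r 0) (r n)
    ((hr_range 0).trans inter_subset_right) ((hr_range n).trans inter_subset_right)
    (Homotopic.subpath_trans_of_squares t r n hsq)

variable [LocallyPathConnectedSpace X]

theorem eventually_homotopic (hX : ∀ x : X, ∃ V ∈ 𝓝 x, IsRelSimplyConnected V)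
    (γ : Path a b) : ∀ᶠ η in 𝓝 γ, γ.Homotopic η := by
  choose V hV hV_sc using hX
  obtain ⟨t, ht0, ht_mono, ⟨n, ht1⟩, hcover⟩ :=
    exists_monotone_Icc_subset_open_cover_unitInterval (c := fun s => γ ⁻¹' interior (V (γ s)))
      (fun s => isOpen_interior.preimage γ.continuous)
      (fun s _ => mem_iUnion.2 ⟨s, mem_interior_iff_mem_nhds.2 (hV _)⟩)
  choose s hs using hcover
  set U : ℕ → Set X := fun k => interior (V (γ (s k)))
  have hU_open (k : ℕ) : IsOpen (U k) := isOpen_interior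
  -- For `k = 0` the truncated subtraction makes this `γ (t 0) ∈ U 0 ∩ U 0`.
  have hγ_node (k : ℕ) : γ (t k) ∈ U (k - 1) ∩ U k := by
    refine ⟨?_, hs k ⟨le_rfl, ht_mono k.le_succ⟩⟩
    cases k with
    | zero => exact hs 0 ⟨le_rfl, ht_mono (Nat.zero_le 1)⟩
    | succ j => exact hs j ⟨ht_mono j.le_succ, le_rfl⟩
  have h_seg : ∀ᶠ η : Path a b in 𝓝 γ, ∀ k ∈ Iio n, MapsTo η (Icc (t k) (t (k + 1))) (U k) :=
    (finite_Iio n).eventually_all.2 fun k _ =>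
      (isOpen_setOf_mapsTo isCompact_Icc (hU_open k)).mem_nhds (hs k)
  have h_node : ∀ᶠ η in 𝓝 γ, ∀ k, η (t k) ∈ pathComponentIn (U (k - 1) ∩ U k) (γ (t k)) := by
    have h_lt : ∀ᶠ η in 𝓝 γ, ∀ k ∈ Iio n,
        η (t k) ∈ pathComponentIn (U (k - 1) ∩ U k) (γ (t k)) :=
      (finite_Iio n).eventually_all.2 fun k _ =>
        ((((hU_open _).inter (hU_open k)).pathComponentIn _).preimage
          (continuous_eval_const (t k))).mem_nhds (mem_pathComponentIn_self (hγ_node k))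
    filter_upwards [h_lt] with η hη k
    rcases lt_or_ge k n with hk | hk
    · exact hη k hk
    · have hγ_end := hγ_node k
      rw [ht1 k hk, γ.target] at hγ_end ⊢
      rw [η.target]
      exact mem_pathComponentIn_self hγ_end
  filter_upwards [h_seg, h_node] with η hη_seg hη_node
  exact Homotopic.of_subdivision ht_mono ht0 (ht1 n le_rfl)
    (fun k => (hV_sc _).mono interior_subset) (fun k _ => hs k) hη_seg hη_node

theorem isOpen_pathComponent (hX : ∀ x : X, ∃ V ∈ 𝓝 x, IsRelSimplyConnected V)
    (γ : Path a b) : IsOpen (pathComponent γ) :=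
  isOpen_iff_mem_nhds.2 fun _ hη =>
    (eventually_homotopic hX _).mono fun _ h => hη.trans h.joined_s4

end Path

theorem isRelSimplyConnected_of_homotopic_const {V U : Set X} (hVU : V ⊆ U) {c : U}
    (h : (ContinuousMap.inclusion hVU).Homotopic (ContinuousMap.const V c)) :
    IsRelSimplyConnected V := by
  intro _ _ q q' hq hq'
  have hf := (ContinuousMap.Homotopic.refl ⟨((↑) : U → X), continuous_subtype_val⟩).comp h
  rw [ContinuousMap.comp_const] at hf
  exact Path.Homotopic.map_of_homotopic_const hf (q.codRestrict hq) (q'.codRestrict hq')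


theorem subset_pathComponentIn_of_homotopic_const {V U : Set X} (hVU : V ⊆ U) {c : U}
    (h : (ContinuousMap.inclusion hVU).Homotopic (ContinuousMap.const V c)) {x : X}
    (hx : x ∈ V) : V ⊆ pathComponentIn U x := by
  obtain ⟨F⟩ := h
  have joinedIn_c : ∀ y (hy : y ∈ V), JoinedIn U y c := fun y hy =>
    (joinedIn_iff_joined (hVU hy) c.2).2 ⟨F.evalAt ⟨y, hy⟩⟩
  exact fun y hy => (joinedIn_c x hx).trans (joinedIn_c y hy).symm

theorem LocallyContractible.locallyPathConnectedSpace (hX : LocallyContractible X) :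
    LocallyPathConnectedSpace X :=
  locallyPathConnectedSpace_iff_pathComponentIn_mem_nhds.2 fun x U hU hxU => by
    obtain ⟨V, hV, hVU, c, hc⟩ := hX x U (hU.mem_nhds hxU)
    exact mem_of_superset hV
      (subset_pathComponentIn_of_homotopic_const hVU hc (mem_of_mem_nhds hV))

theorem LocallyContractible.exists_mem_nhds_isRelSimplyConnected (hX : LocallyContractible X)
    (x : X) : ∃ V ∈ 𝓝 x, IsRelSimplyConnected V := by
  obtain ⟨V, hV, hVU, c, hc⟩ := hX x univ univ_mem
  exact ⟨V, hV, isRelSimplyConnected_of_homotopic_const hVU hc⟩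

theorem ZerothHomotopy.discreteTopology_of_isOpen_pathComponent {Y : Type*}
    [TopologicalSpace Y] (hY : ∀ y : Y, IsOpen (pathComponent y)) :
    DiscreteTopology (ZerothHomotopy Y) := by
  refine discreteTopology_iff_isOpen_singleton.2 fun c => ?_
  obtain ⟨y, rfl⟩ := ZerothHomotopy.mk_surjective c
  rw [← ZerothHomotopy.isQuotientMap_mk.isOpen_preimage,
    ZerothHomotopy.preimage_singleton_eq_pathComponent]
  exact hY y

end

/-- if `X` is locally contractible then `π₁(X,p)` is discrete for
every basepoint `p`. -/
theorem discrete_pi1_of_locallyContractible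
    (X : Type*) [TopologicalSpace X] (h : LocallyContractible X) (p : X) :
    DiscreteTopology (piTop X p) :=
  have := h.locallyPathConnectedSpace
  ZerothHomotopy.discreteTopology_of_isOpen_pathComponent
    (Path.isOpen_pathComponent h.exists_mem_nhds_isRelSimplyConnected)
end
end

section
/- If π₁(X,p) and π₁(Y,q) with their quotient topologies are not homeomorphic as topological spaces, then X and Y do not have the same homotopy type (via basepoint-ignoring homotopy equivalences, assuming X and Y path connected). -/
open unitInterval Topology

noncomputable section

/-! A homotopy `H` from `f` to `g` makes the maps induced on loop spaces agree up to conjugation by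
the track `t ↦ H (t, x)` of the basepoint, and conjugation by a path is a homeomorphism of
topological fundamental groups. So for a homotopy equivalence `f : X → Y` with inverse `g`, both
`g_* ∘ f_*` and `f_* ∘ g_*` are homeomorphisms; hence `g_*` is injective and has the continuous
right inverse `f_* ∘ (g_* ∘ f_*)⁻¹`, so it is a homeomorphism. Path connectedness of `Y` moves
the basepoint `f p` to `q`. -/

open ContinuousMap Function

section

variable {X Y Z : Type*} [TopologicalSpace X] [TopologicalSpace Y] [TopologicalSpace Z]

def Homeomorph.ofInjectiveOfRightInverse (g : C(Y, Z)) (s : C(Z, Y)) (hg : Injective g)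
    (hs : RightInverse s g) : Y ≃ₜ Z where
  toFun := g
  invFun := s
  left_inv := hs.leftInverse_of_injective hg
  right_inv := hs

def Path.Homotopy.toPath {x y : X} {γ γ' : Path x y} (F : γ.Homotopy γ') : Path γ γ' where
  toFun := F.eval
  continuous_toFun := Path.continuous_uncurry_iff.mp F.continuous
  source' := F.eval_zero
  target' := F.eval_one

theorem Path.Homotopic.joined_s6 {x y : X} {γ γ' : Path x y} (h : γ.Homotopic γ') :
    Joined γ γ' :=
  Nonempty.map Path.Homotopy.toPath h

theorem Path.continuous_map_s6 {x y : X} {f : X → Y} (hf : Continuous f) :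
    Continuous fun γ : Path x y => γ.map hf :=
  Path.continuous_uncurry_iff.mp (hf.comp continuous_eval)

open Path.Homotopic.Quotient in
theorem Path.Homotopic.conj_symm_conj {a b : X} (γ : Path a b) (δ : Path b b) :
    ((γ.symm.trans ((γ.trans δ).trans γ.symm)).trans γ.symm.symm).Homotopic δ := by
  refine Path.Homotopic.Quotient.eq.mp ?_
  simp only [mk_trans, mk_symm, Path.symm_symm]
  grind

open Path.Homotopic.Quotient in
theorem ContinuousMap.Homotopy.map_homotopic_conj {f g : C(X, Y)} (H : f.Homotopy g) {x : X}
    (δ : Path x x) :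
    (δ.map f.continuous).Homotopic
      (((H.evalAt x).trans (δ.map g.continuous)).trans (H.evalAt x).symm) := by
  have square := Path.Homotopic.Quotient.eq.mpr (Path.Homotopic.map_trans_evalAt H δ)
  refine Path.Homotopic.Quotient.eq.mp ?_
  simp only [mk_trans, mk_symm] at square ⊢
  rw [← square]
  simp

namespace piTop

variable {a b : X}

theorem piMk_eq_of_homotopic {γ γ' : Path a a} (h : γ.Homotopic γ') : piMk γ = piMk γ' :=
  Quotient.sound h.joined_s6

def ofLoopMap_s6 {c : Y} (F : C(Path a a, Path c c)) : C(piTop X a, piTop Y c) where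
  toFun := Quotient.map F fun _ _ h => h.map F.continuous
  continuous_toFun := (continuous_quot_mk.comp F.continuous).quotient_lift _

def map (f : C(X, Y)) (x : X) : C(piTop X x, piTop Y (f x)) :=
  ofLoopMap_s6 ⟨fun γ => γ.map f.continuous, Path.continuous_map_s6 f.continuous⟩

def conjMap (γ : Path a b) : C(piTop X b, piTop X a) :=
  ofLoopMap_s6 ⟨fun δ => (γ.trans δ).trans γ.symm, by fun_prop⟩

theorem conjMap_symm_conjMap (γ : Path a b) (ξ : piTop X b) :
    conjMap γ.symm (conjMap γ ξ) = ξ :=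
  Quotient.inductionOn ξ fun δ => piMk_eq_of_homotopic (Path.Homotopic.conj_symm_conj γ δ)

def conj (γ : Path a b) : piTop X b ≃ₜ piTop X a where
  toFun := conjMap γ
  invFun := conjMap γ.symm
  left_inv := conjMap_symm_conjMap γ
  right_inv ξ := by simpa only [Path.symm_symm] using conjMap_symm_conjMap γ.symm ξ
  continuous_toFun := (conjMap γ).continuous
  continuous_invFun := (conjMap γ.symm).continuous

theorem map_comp_apply (g : C(Y, Z)) (f : C(X, Y)) (x : X) (ξ : piTop X x) :
    map (g.comp f) x ξ = map g (f x) (map f x ξ) :=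
  Quotient.inductionOn ξ fun _ => rfl

theorem map_id_apply (x : X) (ξ : piTop X x) : map (ContinuousMap.id X) x ξ = ξ :=
  Quotient.inductionOn ξ fun γ => congrArg piMk (Path.map_id γ)

end piTop

theorem ContinuousMap.Homotopy.piTop_map_eq_conj {f g : C(X, Y)} (H : f.Homotopy g) (x : X)
    (ξ : piTop X x) : piTop.map f x ξ = piTop.conj (H.evalAt x) (piTop.map g x ξ) :=
  Quotient.inductionOn ξ fun δ => piTop.piMk_eq_of_homotopic (H.map_homotopic_conj δ)

theorem ContinuousMap.Homotopy.piTop_map_map_eq_conj {f : C(X, Y)} {g : C(Y, X)}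
    (H : (g.comp f).Homotopy (ContinuousMap.id X)) (x : X) (ξ : piTop X x) :
    piTop.map g (f x) (piTop.map f x ξ) = piTop.conj (H.evalAt x) ξ := by
  rw [← piTop.map_comp_apply, H.piTop_map_eq_conj, piTop.map_id_apply]

def ContinuousMap.HomotopyEquiv.piTopHomeomorph (e : X ≃ₕ Y) (x : X) :
    piTop X x ≃ₜ piTop Y (e x) :=
  let α := e.left_inv.some.evalAt x
  have hgf := e.left_inv.some.piTop_map_map_eq_conj x
  have hfg := e.right_inv.some.piTop_map_map_eq_conj (e x)
  have hG : Injective (piTop.map e.invFun (e x)) :=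
    .of_comp (f := piTop.map e.toFun _) <| by
      rw [show _ ∘ _ = _ from funext hfg]; exact Homeomorph.injective _
  (piTop.conj α).trans <| Homeomorph.symm <|
    .ofInjectiveOfRightInverse (piTop.map e.invFun (e x))
      ((piTop.map e.toFun x).comp ⟨_, (piTop.conj α).symm.continuous⟩) hG
      fun ζ => (hgf ((piTop.conj α).symm ζ)).trans ((piTop.conj α).apply_symm_apply ζ)

end

theorem not_homotopy_equivalent_of_pi1_not_homeomorphic_general
    (X Y : Type*) [TopologicalSpace X] [TopologicalSpace Y]
    [PathConnectedSpace Y] (p : X) (q : Y)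
    (h : IsEmpty (piTop X p ≃ₜ piTop Y q)) :
    IsEmpty (ContinuousMap.HomotopyEquiv X Y) :=
  ⟨fun e => h.false <|
    (e.piTopHomeomorph p).trans (piTop.conj (PathConnectedSpace.somePath q (e p)))⟩

/-- for path connected `X`, `Y`, if the topological fundamental
groups `π₁(X,p)` and `π₁(Y,q)` are not homeomorphic, then `X` and `Y` do not
have the same homotopy type. -/
theorem not_homotopy_equivalent_of_pi1_not_homeomorphic
    (X Y : Type*) [TopologicalSpace X] [TopologicalSpace Y]
    [PathConnectedSpace X] [PathConnectedSpace Y] (p : X) (q : Y)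
    (h : IsEmpty (piTop X p ≃ₜ piTop Y q)) :
    IsEmpty (ContinuousMap.HomotopyEquiv X Y) :=
  not_homotopy_equivalent_of_pi1_not_homeomorphic_general X Y p q h
end
end

section
/- For n ≥ 2 let C_n ⊂ ℝ² be the boundary of the triangle with vertices (0,0), (1/n, 1), and (1/n,1) + 10^{-10n}·(n,−1), and let X = ⋃_{n≥2} C_n. Then X is path connected and locally contractible. -/
open unitInterval Topology

noncomputable section

/-- The common basepoint `p = (0,0)`. -/
def pp : ℝ × ℝ := (0, 0)

/-- The apex `(1/n, 1)` of the `n`-th triangle. -/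
def apex (n : ℕ) : ℝ × ℝ := (1 / (n : ℝ), 1)

/-- The third vertex `(1/n,1) + 10^{-10n}·(n,-1)` of the `n`-th triangle. -/
def apex' (n : ℕ) : ℝ × ℝ := apex n + (((10 : ℝ) ^ (10 * n))⁻¹) • ((n : ℝ), -1)

/-- The boundary of the `n`-th triangle, i.e. the union of its three edges. -/
def Cset (n : ℕ) : Set (ℝ × ℝ) :=
  segment ℝ pp (apex n) ∪ segment ℝ (apex n) (apex' n) ∪ segment ℝ (apex' n) pp

/-- The bouquet `X = ⋃_{n ≥ 2} C_n`. -/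
def Xset : Set (ℝ × ℝ) := ⋃ n ∈ {n : ℕ | 2 ≤ n}, Cset n

/-- The segment `α` from `(0,0)` to `(0,1)`. -/
def alphaSet : Set (ℝ × ℝ) := segment ℝ (0, 0) (0, 1)

/-- The compactification `Y = X ∪ α`. -/
def Yset : Set (ℝ × ℝ) := Xset ∪ alphaSet

lemma pp_mem_C (n : ℕ) : pp ∈ Cset n := Or.inl (Or.inl (left_mem_segment ℝ _ _))

lemma pp_mem_X : pp ∈ Xset :=
  Set.mem_biUnion (by norm_num : (2 : ℕ) ∈ {n : ℕ | 2 ≤ n}) (pp_mem_C 2)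

lemma X_sub_Y : Xset ⊆ Yset := Set.subset_union_left

lemma pp_mem_Y : pp ∈ Yset := X_sub_Y pp_mem_X

/-- The basepoint of `X`. -/
def pX : ↥Xset := ⟨pp, pp_mem_X⟩

/-- The basepoint of `Y`. -/
def pY : ↥Yset := ⟨pp, pp_mem_Y⟩

/-- The inclusion `X ↪ Y` as a continuous map between subspaces. -/
def jXY : C(↥Xset, ↥Yset) := ⟨Set.inclusion X_sub_Y, continuous_inclusion X_sub_Y⟩

lemma jXY_pX : jXY pX = pY := rfl

/-! `X` is a union of triangles through `p`, hence path connected. For local contractibility it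
suffices that near each `x ∈ X` every segment from `x` to a point of `X` stays in `X`; then
straight-line homotopies contract small balls. Near `p` the only edges are the two sides through
`p`, since the third sides lie at height `≥ 1/2`. At `x ≠ p` we have `x.1 > 0`, while
`C_n ⊆ {y.1 ≤ 2/n}`; so only finitely many closed edges come near `x`, and near `x` every edge
through a point of `X` passes through `x`. -/

open Set Filter Metric

theorem isCompact_segment {E : Type*} [TopologicalSpace E] [AddCommGroup E] [Module ℝ E]
    [ContinuousAdd E] [ContinuousSMul ℝ E] (x y : E) : IsCompact (segment ℝ x y) := by
  rw [segment_eq_image]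
  exact isCompact_Icc.image (by fun_prop)

theorem IsClosed.eventually_mem_imp_mem {X : Type*} [TopologicalSpace X] {s : Set X}
    (hs : IsClosed s) (x : X) : ∀ᶠ y in 𝓝 x, y ∈ s → x ∈ s := by
  by_cases hx : x ∈ s
  · exact Eventually.of_forall fun _ _ => hx
  · filter_upwards [hs.isOpen_compl.mem_nhds hx] with y hy hys
    exact absurd hys hy

theorem isPathConnected_biUnion_of_mem {X ι : Type*} [TopologicalSpace X] {s : Set ι}
    {t : ι → Set X} {x : X} (hs : s.Nonempty) (ht : ∀ i ∈ s, IsPathConnected (t i))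
    (hx : ∀ i ∈ s, x ∈ t i) : IsPathConnected (⋃ i ∈ s, t i) := by
  obtain ⟨i₀, hi₀⟩ := hs
  refine ⟨x, mem_biUnion hi₀ (hx i₀ hi₀), fun y hy => ?_⟩
  obtain ⟨i, hi, hyi⟩ := mem_iUnion₂.1 hy
  exact ((ht i hi).joinedIn x (hx i hi) y hyi).mono (subset_biUnion_of_mem hi)

theorem locallyContractible_of_eventually_segment_subset {E : Type*}
    [SeminormedAddCommGroup E] [NormedSpace ℝ E] {S : Set E}
    (hS : ∀ x ∈ S, ∀ᶠ y in 𝓝 x, y ∈ S → segment ℝ x y ⊆ S) : LocallyContractible S := by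
  intro x U hU
  obtain ⟨T, hT, hTU⟩ := (mem_nhds_subtype _ _ _).mp hU
  obtain ⟨ε, hε, hball⟩ := eventually_nhds_iff_ball.mp ((hS x x.2).and hT)
  set V : Set S := Subtype.val ⁻¹' ball (x : E) ε
  have hVU : V ⊆ U := fun v hv => hTU (hball v hv).2
  have hmem : ∀ (t : I) (v : V),
      (t : ℝ) • (x : E) + (1 - (t : ℝ)) • (v : E) ∈ S ∩ ball (x : E) ε := by
    intro t v
    have hseg : segment ℝ (x : E) v ⊆ S ∩ ball (x : E) ε :=
      subset_inter ((hball v v.2).1 v.1.2)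
        ((convex_ball _ _).segment_subset (mem_ball_self hε) v.2)
    exact hseg ⟨t, 1 - t, t.2.1, sub_nonneg.2 t.2.2, add_sub_cancel _ _, rfl⟩
  refine ⟨V, (mem_nhds_subtype _ _ _).mpr ⟨_, ball_mem_nhds _ hε, subset_rfl⟩, hVU,
    ⟨x, mem_of_mem_nhds hU⟩,
    ⟨⟨⟨fun p => ⟨⟨_, (hmem p.1 p.2).1⟩, hVU (hmem p.1 p.2).2⟩, ?_⟩,
      fun v => by ext; simp, fun v => by ext; simp⟩⟩⟩
  fun_prop

lemma apex'_fst (n : ℕ) : (apex' n).1 = 1 / n + ((10 : ℝ) ^ (10 * n))⁻¹ * n := rfl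

lemma apex'_snd (n : ℕ) : (apex' n).2 = 1 - ((10 : ℝ) ^ (10 * n))⁻¹ := by
  simp [apex', apex, sub_eq_add_neg]

lemma two_mul_sq_le_ten_pow (n : ℕ) : 2 * n ^ 2 ≤ 10 ^ (10 * n) := by
  rcases Nat.eq_zero_or_pos n with rfl | hn
  · norm_num
  calc 2 * n ^ 2 ≤ 10 * (10 ^ n) ^ 2 := by
        gcongr
        · norm_num
        · exact (Nat.lt_pow_self (by norm_num)).le
    _ = 10 ^ (2 * n + 1) := by ring
    _ ≤ 10 ^ (10 * n) := Nat.pow_le_pow_right (by norm_num) (by omega)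

/-- The only property of the perturbation `10^(-10n)` used below. -/
lemma sq_mul_inv_ten_pow_le (n : ℕ) : (n : ℝ) ^ 2 * ((10 : ℝ) ^ (10 * n))⁻¹ ≤ 1 / 2 := by
  rw [← div_eq_mul_inv, div_le_iff₀ (by positivity)]
  have h : (2 * n ^ 2 : ℝ) ≤ 10 ^ (10 * n) := by exact_mod_cast two_mul_sq_le_ten_pow n
  linarith

lemma half_le_apex'_snd {n : ℕ} (hn : 0 < n) : 1 / 2 ≤ (apex' n).2 := by
  have hδ := sq_mul_inv_ten_pow_le n
  have hn1 : (1 : ℝ) ≤ n ^ 2 := by norm_cast; nlinarith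
  rw [apex'_snd]
  nlinarith [inv_pos.2 (by positivity : (0 : ℝ) < 10 ^ (10 * n))]

lemma apex'_fst_le {n : ℕ} (hn : 0 < n) : (apex' n).1 ≤ 2 / n := by
  have hδ := sq_mul_inv_ten_pow_le n
  have hn0 : (0 : ℝ) < n := by exact_mod_cast hn
  have hδn : ((10 : ℝ) ^ (10 * n))⁻¹ * n ≤ 1 / n := by
    rw [le_div_iff₀ hn0]
    linarith
  rw [apex'_fst, show (2 : ℝ) / n = 1 / n + 1 / n by ring]
  gcongr

lemma apex'_snd_le {n : ℕ} (hn : 0 < n) : (apex' n).2 ≤ n * (apex' n).1 := by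
  have hδ := sq_mul_inv_ten_pow_le n
  have hn0 : (0 : ℝ) < n := by exact_mod_cast hn
  rw [apex'_fst, apex'_snd, mul_add, mul_one_div_cancel hn0.ne']
  nlinarith [inv_pos.2 (by positivity : (0 : ℝ) < 10 ^ (10 * n))]

lemma Cset_subset_of_convex {n : ℕ} {s : Set (ℝ × ℝ)} (hs : Convex ℝ s) (h₀ : pp ∈ s)
    (h₁ : apex n ∈ s) (h₂ : apex' n ∈ s) : Cset n ⊆ s :=
  union_subset (union_subset (hs.segment_subset h₀ h₁) (hs.segment_subset h₁ h₂))
    (hs.segment_subset h₂ h₀)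

lemma half_le_snd_of_mem_segment_apex {n : ℕ} (hn : 0 < n) {y : ℝ × ℝ}
    (hy : y ∈ segment ℝ (apex n) (apex' n)) : 1 / 2 ≤ y.2 :=
  ((convex_univ.prod (convex_Ici _)).segment_subset
    (by norm_num [apex] : apex n ∈ univ ×ˢ Ici (1 / 2))
    ⟨trivial, half_le_apex'_snd hn⟩ hy).2

lemma fst_le_of_mem_Cset {n : ℕ} (hn : 0 < n) {y : ℝ × ℝ} (hy : y ∈ Cset n) :
    y.1 ≤ 2 / n := by
  have hn0 : (0 : ℝ) < n := by exact_mod_cast hn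
  refine (Cset_subset_of_convex (s := Iic (2 / (n : ℝ)) ×ˢ univ)
    ((convex_Iic _).prod convex_univ)
    ⟨?_, trivial⟩ ⟨?_, trivial⟩ ⟨apex'_fst_le hn, trivial⟩ hy).1
  · simp only [pp, mem_Iic]
    positivity
  · simp only [apex, mem_Iic]
    gcongr
    norm_num

lemma fst_pos_of_mem_Cset {n : ℕ} (hn : 0 < n) {y : ℝ × ℝ} (hy : y ∈ Cset n)
    (hyp : y ≠ pp) : 0 < y.1 := by
  have hn0 : (0 : ℝ) < n := by exact_mod_cast hn
  -- `C_n` lies in the cone `0 ≤ y.2 ≤ n * y.1`, which meets the line `y.1 = 0` only at `p`.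
  have hlin : IsLinearMap ℝ fun w : ℝ × ℝ => w.2 - n * w.1 :=
    ⟨fun a b => by simp only [Prod.fst_add, Prod.snd_add]; ring,
      fun c a => by simp only [Prod.smul_fst, Prod.smul_snd, smul_eq_mul]; ring⟩
  have hcone := Cset_subset_of_convex
    ((convex_halfSpace_ge (LinearMap.snd ℝ ℝ ℝ).isLinear 0).inter
      (convex_halfSpace_le hlin 0))
    (by simp [pp]) (by simp [apex, mul_inv_cancel₀ hn0.ne'])
    ⟨by simpa using (by norm_num : (0 : ℝ) ≤ 1 / 2).trans (half_le_apex'_snd hn),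
      by simpa using apex'_snd_le hn⟩ hy
  simp only [mem_inter_iff, mem_ofPred_eq, LinearMap.snd_apply] at hcone
  by_contra h
  apply hyp
  ext <;> simp [pp] <;> nlinarith

lemma isPathConnected_Cset (n : ℕ) : IsPathConnected (Cset n) :=
  (((convex_segment _ _).isPathConnected ⟨_, left_mem_segment ℝ _ _⟩).union
      ((convex_segment _ _).isPathConnected ⟨_, left_mem_segment ℝ _ _⟩)
      ⟨apex n, right_mem_segment ℝ _ _, left_mem_segment ℝ _ _⟩).union
    ((convex_segment _ _).isPathConnected ⟨_, left_mem_segment ℝ _ _⟩)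
    ⟨apex' n, Or.inr (right_mem_segment ℝ _ _), left_mem_segment ℝ _ _⟩

def edge (n : ℕ) : Fin 3 → Set (ℝ × ℝ) :=
  ![segment ℝ pp (apex n), segment ℝ (apex n) (apex' n), segment ℝ (apex' n) pp]

lemma convex_edge (n : ℕ) (j : Fin 3) : Convex ℝ (edge n j) := by
  fin_cases j <;> exact convex_segment _ _

lemma isClosed_edge (n : ℕ) (j : Fin 3) : IsClosed (edge n j) := by
  fin_cases j <;> exact (isCompact_segment _ _).isClosed

lemma Cset_eq_iUnion_edge (n : ℕ) : Cset n = ⋃ j, edge n j := by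
  ext y
  simp [Cset, edge, Fin.exists_fin_succ, or_assoc]

lemma edge_subset_Cset (n : ℕ) (j : Fin 3) : edge n j ⊆ Cset n :=
  (Cset_eq_iUnion_edge n).symm ▸ subset_iUnion _ j

lemma mem_Xset_iff {y : ℝ × ℝ} : y ∈ Xset ↔ ∃ n, 2 ≤ n ∧ ∃ j, y ∈ edge n j := by
  simp [Xset, Cset_eq_iUnion_edge]

lemma edge_subset_Xset {n : ℕ} (hn : 2 ≤ n) (j : Fin 3) : edge n j ⊆ Xset :=
  fun _ hy => mem_Xset_iff.2 ⟨n, hn, j, hy⟩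

lemma eventually_mem_edge_imp_pp_mem :
    ∀ᶠ y in 𝓝 pp, ∀ n, 0 < n → ∀ j, y ∈ edge n j → pp ∈ edge n j := by
  have hlow : ∀ᶠ y in 𝓝 pp, y.2 < 1 / 2 :=
    (continuous_snd.tendsto pp).eventually (gt_mem_nhds (by norm_num [pp]))
  filter_upwards [hlow] with y hy n hn j hyj
  fin_cases j
  · exact left_mem_segment ℝ _ _
  · exact absurd (half_le_snd_of_mem_segment_apex hn hyj) (not_le.2 hy)
  · exact right_mem_segment ℝ _ _

lemma eventually_mem_edge_imp_mem {x : ℝ × ℝ} (hx : 0 < x.1) :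
    ∀ᶠ y in 𝓝 x, ∀ n, 0 < n → ∀ j, y ∈ edge n j → x ∈ edge n j := by
  obtain ⟨M, hM⟩ := exists_nat_gt (4 / x.1)
  have hfar : ∀ᶠ y in 𝓝 x, x.1 / 2 < y.1 :=
    (continuous_fst.tendsto x).eventually (lt_mem_nhds (half_lt_self hx))
  have hnear :
      ∀ᶠ y in 𝓝 x, ∀ n ∈ Finset.range M, ∀ j, y ∈ edge n j → x ∈ edge n j := by
    simp only [eventually_all_finset, eventually_all]
    exact fun n _ j => (isClosed_edge n j).eventually_mem_imp_mem x
  filter_upwards [hfar, hnear] with y hy₁ hy n hn j hyj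
  by_cases hnM : n < M
  · exact hy n (Finset.mem_range.2 hnM) j hyj
  · have hMn : (M : ℝ) ≤ n := by exact_mod_cast not_lt.1 hnM
    have hMx : 4 < M * x.1 := by rwa [div_lt_iff₀ hx] at hM
    have hn0 : (0 : ℝ) < n := by exact_mod_cast hn
    have : 2 / (n : ℝ) < x.1 / 2 := by
      rw [div_lt_div_iff₀ hn0 two_pos]
      nlinarith
    linarith [fst_le_of_mem_Cset hn (edge_subset_Cset n j hyj)]

lemma Xset_eventually_segment_subset {x : ℝ × ℝ} (hx : x ∈ Xset) :
    ∀ᶠ y in 𝓝 x, y ∈ Xset → segment ℝ x y ⊆ Xset := by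
  have hedge : ∀ᶠ y in 𝓝 x, ∀ n, 0 < n → ∀ j, y ∈ edge n j → x ∈ edge n j := by
    rcases eq_or_ne x pp with rfl | hxp
    · exact eventually_mem_edge_imp_pp_mem
    · obtain ⟨n, hn, j, hxj⟩ := mem_Xset_iff.1 hx
      exact eventually_mem_edge_imp_mem
        (fst_pos_of_mem_Cset (by omega) (edge_subset_Cset n j hxj) hxp)
  filter_upwards [hedge] with y hy hyX
  obtain ⟨n, hn, j, hyj⟩ := mem_Xset_iff.1 hyX
  exact ((convex_edge n j).segment_subset (hy n (by omega) j hyj) hyj).trans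
    (edge_subset_Xset hn j)

/-- the bouquet `X = ⋃_{n ≥ 2} C_n` is path connected and locally
contractible. -/
theorem Xset_pathConnected_locallyContractible :
    IsPathConnected Xset ∧ LocallyContractible ↥Xset :=
  ⟨isPathConnected_biUnion_of_mem ⟨2, le_refl 2⟩ (fun n _ => isPathConnected_Cset n)
      (fun n _ => pp_mem_C n),
    locallyContractible_of_eventually_segment_subset fun _ => Xset_eventually_segment_subset⟩
end
end

section
/- Let X = ⋃_{n≥2} C_n be the bouquet of triangle boundaries C_n (vertices (0,0), (1/n,1), (1/n,1) + 10^{-10n}(n,−1)) with common point p = (0,0), let α be the segment from (0,0) to (0,1), and Y = X ∪ α. If f : ∂D² → X is a loop with f(1) = p that extends to a continuous map F : D² → Y, then f also extends to a continuous map G : D² → X. Consequently the inclusion-induced homomorphism j* : π₁(X,p) → π₁(Y,p) is injective. -/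
open unitInterval Topology

noncomputable section

lemma basept_mem_disk : ((1 : ℝ), (0 : ℝ)) ∈ Metric.closedBall (0 : ℝ × ℝ) 1 := by
  rw [Metric.mem_closedBall]
  simp [Prod.dist_eq]

/-!
Away from `p`, the ray coordinate `x / (x + y)` is continuous on `Y`, vanishes on `α`, is
positive on `X`, and omits the intervals `(θ_{m+1}, 1/(m+1))`, where `θ_n < 1/n` is its value at
the third vertex of `C_n`. These gaps accumulate at `0`, so a path in `Y \ {p}` that starts on `α`
stays on `α`: `Y \ X` is a union of path components of `Y \ {p}`. For a map `F` into `Y` from a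
locally path connected space the preimage of `Y \ X` is therefore open, and sending it to `p`
keeps `F` continuous (near `F⁻¹ p` it only moves points to `p`). Applied to the disk this gives
`G`; applied to the square it turns a homotopy in `Y` between loops of `X` into one in `X`.
-/

open Set Filter

theorem IsPreconnected.subset_Iic_of_exists_gap {α : Type*} [LinearOrder α] [TopologicalSpace α]
    [OrderClosedTopology α] {S K : Set α} {a : α} (hS : IsPreconnected S) (hSK : S ⊆ K)
    (ha : a ∈ S) (hgap : ∀ s, a < s → ∃ c ∈ Ioo a s, c ∉ K) : S ⊆ Iic a := by
  intro s hs
  by_contra has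
  obtain ⟨c, hc, hcK⟩ := hgap s (not_le.1 has)
  exact hcK (hSK (hS.Icc_subset ha hs (Ioo_subset_Icc_self hc)))

section PinchOutside

variable {T : Type*} {X Y : Set T} {p : T}

open scoped Classical in
def pinchOutside (X : Set T) (p y : T) : T := if y ∈ X then y else p

lemma pinchOutside_of_mem {y : T} (hy : y ∈ X) : pinchOutside X p y = y := if_pos hy

lemma pinchOutside_of_notMem {y : T} (hy : y ∉ X) : pinchOutside X p y = p := if_neg hy

lemma pinchOutside_mem (hp : p ∈ X) (y : T) : pinchOutside X p y ∈ X := by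
  by_cases hy : y ∈ X
  · rwa [pinchOutside_of_mem hy]
  · rwa [pinchOutside_of_notMem hy]

variable [TopologicalSpace T] [T1Space T]

theorem continuous_pinchOutside {Z : Type*} [TopologicalSpace Z] [LocallyPathConnectedSpace Z]
    (hsep : ∀ x y, JoinedIn (Y \ {p}) x y → x ∉ X → y ∉ X) {F : Z → T} (hF : Continuous F)
    (hFY : ∀ z, F z ∈ Y) : Continuous fun z => pinchOutside X p (F z) := by
  refine continuous_iff_continuousAt.2 fun z => ?_
  by_cases hz : F z = p
  · have hGz : pinchOutside X p (F z) = p := by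
      by_cases h : F z ∈ X
      · rw [pinchOutside_of_mem h, hz]
      · exact pinchOutside_of_notMem h
    rw [ContinuousAt, hGz]
    intro U hU
    refine mem_map.2 <| mem_of_superset (hF.continuousAt (hz ▸ hU)) fun w (hw : F w ∈ U) => ?_
    by_cases h : F w ∈ X
    · rwa [mem_preimage, pinchOutside_of_mem h]
    · rw [mem_preimage, pinchOutside_of_notMem h]
      exact mem_of_mem_nhds hU
  · have hjoin : ∀ᶠ w in 𝓝 z, JoinedIn (Y \ {p}) (F z) (F w) := by
      obtain ⟨N, ⟨hN, hNpc⟩, hNp⟩ := (path_connected_basis z).mem_iff.1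
        (hF.continuousAt.preimage_mem_nhds (isOpen_compl_singleton.mem_nhds hz))
      filter_upwards [hN] with w hw
      exact ((hNpc.joinedIn z (mem_of_mem_nhds hN) w hw).map hF).mono
        (image_subset_iff.2 fun v hv => ⟨hFY v, hNp hv⟩)
    by_cases hzX : F z ∈ X
    · refine hF.continuousAt.congr ?_
      filter_upwards [hjoin] with w hw
      exact (pinchOutside_of_mem (not_not.1 fun h => hsep _ _ hw.symm h hzX)).symm
    · refine (continuousAt_const (y := p)).congr ?_
      filter_upwards [hjoin] with w hw
      exact (pinchOutside_of_notMem (hsep _ _ hw hzX)).symm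

theorem Path.joined_of_joined_map_inclusion (hXY : X ⊆ Y) (hp : p ∈ X)
    (hsep : ∀ x y, JoinedIn (Y \ {p}) x y → x ∉ X → y ∉ X) {x y : X} {a b : Path x y}
    (h : Joined (a.map (continuous_inclusion hXY)) (b.map (continuous_inclusion hXY))) :
    Joined a b := by
  obtain ⟨Γ⟩ := h
  have : LocallyPathConnectedSpace I := (convex_Icc (0 : ℝ) 1).locallyPathConnectedSpace
  have hG : Continuous fun st : I × I => pinchOutside X p (Γ st.1 st.2 : T) :=
    continuous_pinchOutside hsep
      (continuous_subtype_val.comp (Path.continuous_uncurry_iff.2 Γ.continuous))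
      fun st => (Γ st.1 st.2).2
  refine ⟨{ toFun := fun s =>
              { toFun := fun t => ⟨pinchOutside X p (Γ s t), pinchOutside_mem hp _⟩
                continuous_toFun := (hG.comp (Continuous.prodMk_right s)).subtype_mk _
                source' := ?_
                target' := ?_ }
            continuous_toFun := Path.continuous_uncurry_iff.1 (hG.subtype_mk _)
            source' := ?_
            target' := ?_ }⟩
  -- on the boundary of the square `Γ` takes values in `X`, where pinching is the identity
  all_goals
    ext
    simp [pinchOutside_of_mem]

end PinchOutside

/-- The first coordinate of the point where the ray from `pp` through `v` meets `x + y = 1`. -/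
def rayCoord (v : ℝ × ℝ) : ℝ := v.1 / (v.1 + v.2)

lemma rayCoord_smul (v : ℝ × ℝ) {c : ℝ} (hc : 0 < c) : rayCoord (c • v) = rayCoord v := by
  simp only [rayCoord, Prod.smul_fst, Prod.smul_snd, smul_eq_mul, ← mul_add,
    mul_div_mul_left _ _ hc.ne']

lemma eq_zero_or_exists_pos_smul_of_mem_segment {E : Type*} [AddCommGroup E] [Module ℝ E]
    {b y : E} (hy : y ∈ segment ℝ 0 b) :
    y = 0 ∨ ∃ c : ℝ, 0 < c ∧ y = c • b := by
  obtain ⟨u, v, -, hv, -, rfl⟩ := hy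
  rcases hv.eq_or_lt with rfl | hv
  · simp
  · exact Or.inr ⟨v, hv, by simp⟩

lemma rayCoord_mem_Icc_of_mem_segment {a b y : ℝ × ℝ} (ha : 0 < a.1 + a.2) (hb : 0 < b.1 + b.2)
    (hab : rayCoord a ≤ rayCoord b) (hy : y ∈ segment ℝ a b) :
    0 < y.1 + y.2 ∧ rayCoord y ∈ Icc (rayCoord a) (rayCoord b) := by
  obtain ⟨u, v, hu, hv, huv, rfl⟩ := hy
  simp only [rayCoord, Prod.fst_add, Prod.snd_add, Prod.smul_fst, Prod.smul_snd,
    smul_eq_mul] at hab ⊢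
  rw [div_le_div_iff₀ ha hb] at hab
  have hpos : 0 < u * a.1 + v * b.1 + (u * a.2 + v * b.2) := by
    nlinarith [mul_le_mul_of_nonneg_left (min_le_left (a.1 + a.2) (b.1 + b.2)) hu,
      mul_le_mul_of_nonneg_left (min_le_right (a.1 + a.2) (b.1 + b.2)) hv, lt_min ha hb]
  refine ⟨hpos, ?_, ?_⟩
  · rw [div_le_div_iff₀ ha hpos]
    nlinarith [mul_nonneg hv (sub_nonneg.2 hab)]
  · rw [div_le_div_iff₀ hpos hb]
    nlinarith [mul_nonneg hu (sub_nonneg.2 hab)]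

lemma apex_sum_pos (n : ℕ) : 0 < (apex n).1 + (apex n).2 := by
  simp only [apex]
  positivity

lemma rayCoord_apex {n : ℕ} (hn : n ≠ 0) : rayCoord (apex n) = 1 / (n + 1) := by
  simp only [rayCoord, apex]
  field_simp
  ring

lemma apex'_eq (n : ℕ) :
    apex' n = (1 / n + n * ((10 : ℝ) ^ (10 * n))⁻¹, 1 - ((10 : ℝ) ^ (10 * n))⁻¹) := by
  simp only [apex', apex, Prod.smul_mk, smul_eq_mul, Prod.mk_add_mk]
  ring_nf

lemma natCast_pow_three_lt (n : ℕ) : (n : ℝ) ^ 3 < (10 : ℝ) ^ (10 * n) := by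
  have : n ^ 3 < 10 ^ (10 * n) :=
    calc n ^ 3 < (2 ^ n) ^ 3 := Nat.pow_lt_pow_left n.lt_two_pow_self (by norm_num)
      _ = 8 ^ n := by rw [← pow_mul, mul_comm, pow_mul]; norm_num
      _ ≤ 10 ^ (10 * n) := (Nat.pow_le_pow_left (by norm_num) n).trans
          (Nat.pow_le_pow_right (by norm_num) (by omega))
  exact_mod_cast this

lemma apex'_sum_pos {n : ℕ} (hn : 0 < n) : 0 < (apex' n).1 + (apex' n).2 := by
  have hn' : (1 : ℝ) ≤ n := by exact_mod_cast hn
  have he : 0 ≤ ((10 : ℝ) ^ (10 * n))⁻¹ := by positivity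
  have : 0 < 1 / (n : ℝ) := by positivity
  rw [apex'_eq]
  nlinarith [mul_le_mul_of_nonneg_right hn' he]

lemma one_div_succ_le_rayCoord_apex' {n : ℕ} (hn : 0 < n) :
    1 / ((n : ℝ) + 1) ≤ rayCoord (apex' n) := by
  have hsum := apex'_sum_pos hn
  rw [rayCoord, div_le_div_iff₀ (by positivity) hsum]
  rw [apex'_eq] at hsum ⊢
  have hn' : (0 : ℝ) < n := by exact_mod_cast hn
  have hinv : 1 / (n : ℝ) * n = 1 := by field_simp
  have he : (0 : ℝ) < ((10 : ℝ) ^ (10 * n))⁻¹ := by positivity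
  nlinarith [mul_pos he (mul_pos hn' hn')]

lemma rayCoord_apex'_lt {n : ℕ} (hn : 0 < n) : rayCoord (apex' n) < 1 / n := by
  have hsum := apex'_sum_pos hn
  have hn' : (1 : ℝ) ≤ n := by exact_mod_cast hn
  rw [rayCoord, div_lt_div_iff₀ hsum (by positivity)]
  rw [apex'_eq] at hsum ⊢
  set e := ((10 : ℝ) ^ (10 * n))⁻¹
  have he : 0 < e := by positivity
  have hcube : e * (n : ℝ) ^ 3 < 1 := by
    calc e * (n : ℝ) ^ 3 < e * (10 : ℝ) ^ (10 * n) :=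
          mul_lt_mul_of_pos_left (natCast_pow_three_lt n) he
      _ = 1 := inv_mul_cancel₀ (by positivity)
  have hinv : 1 / (n : ℝ) * n = 1 := by field_simp
  nlinarith [mul_le_mul_of_nonneg_left (by nlinarith : (n : ℝ) ^ 2 - n + 1 ≤ (n : ℝ) ^ 2)
    (mul_nonneg he.le (by positivity : (0 : ℝ) ≤ n))]

lemma rayCoord_apex'_pos {n : ℕ} (hn : 0 < n) : 0 < rayCoord (apex' n) :=
  (by positivity : (0 : ℝ) < 1 / ((n : ℝ) + 1)).trans_le (one_div_succ_le_rayCoord_apex' hn)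

lemma eq_pp_or_of_mem_Cset {n : ℕ} (hn : 0 < n) {y : ℝ × ℝ} (hy : y ∈ Cset n) :
    y = pp ∨ 0 < y.1 + y.2 ∧ rayCoord y ∈ Icc (1 / ((n : ℝ) + 1)) (rayCoord (apex' n)) := by
  have hlow := one_div_succ_le_rayCoord_apex' hn
  rcases hy with (hy | hy) | hy
  · refine (eq_zero_or_exists_pos_smul_of_mem_segment hy).imp id ?_
    rintro ⟨c, hc, rfl⟩
    rw [rayCoord_smul _ hc, rayCoord_apex hn.ne']
    exact ⟨by simpa [mul_add] using mul_pos hc (apex_sum_pos n), le_rfl, hlow⟩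
  · right
    rw [← rayCoord_apex hn.ne']
    exact rayCoord_mem_Icc_of_mem_segment (apex_sum_pos n) (apex'_sum_pos hn)
      (rayCoord_apex hn.ne' ▸ hlow) hy
  · rw [segment_symm] at hy
    refine (eq_zero_or_exists_pos_smul_of_mem_segment hy).imp id ?_
    rintro ⟨c, hc, rfl⟩
    rw [rayCoord_smul _ hc]
    exact ⟨by simpa [mul_add] using mul_pos hc (apex'_sum_pos hn), hlow, le_rfl⟩

lemma eq_pp_or_of_mem_alphaSet {y : ℝ × ℝ} (hy : y ∈ alphaSet) :
    y = pp ∨ 0 < y.1 + y.2 ∧ rayCoord y = 0 := by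
  refine (eq_zero_or_exists_pos_smul_of_mem_segment hy).imp id ?_
  rintro ⟨c, hc, rfl⟩
  simp [rayCoord, hc]

lemma exists_Cset_of_mem_Xset {y : ℝ × ℝ} (hy : y ∈ Xset) :
    ∃ n, 2 ≤ n ∧ y ∈ Cset n := by
  simpa [Xset] using hy

lemma sum_pos_of_mem_Yset {y : ℝ × ℝ} (hy : y ∈ Yset) (hyp : y ≠ pp) : 0 < y.1 + y.2 := by
  rcases hy with hy | hy
  · obtain ⟨n, hn, hy⟩ := exists_Cset_of_mem_Xset hy
    exact ((eq_pp_or_of_mem_Cset (by omega) hy).resolve_left hyp).1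
  · exact ((eq_pp_or_of_mem_alphaSet hy).resolve_left hyp).1

lemma continuousOn_rayCoord : ContinuousOn rayCoord (Yset \ {pp}) :=
  continuous_fst.continuousOn.div (by fun_prop) fun _ hy => (sum_pos_of_mem_Yset hy.1 hy.2).ne'

lemma rayCoord_pos_of_mem_Xset {y : ℝ × ℝ} (hy : y ∈ Xset) (hyp : y ≠ pp) :
    0 < rayCoord y := by
  obtain ⟨n, hn, hy⟩ := exists_Cset_of_mem_Xset hy
  exact (by positivity : (0 : ℝ) < 1 / ((n : ℝ) + 1)).trans_le
    ((eq_pp_or_of_mem_Cset (by omega) hy).resolve_left hyp).2.1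

lemma rayCoord_notMem_Ioo {y : ℝ × ℝ} (hy : y ∈ Yset) (hyp : y ≠ pp) (m : ℕ) :
    rayCoord y ∉ Ioo (rayCoord (apex' (m + 1))) (1 / ((m : ℝ) + 1)) := by
  rintro ⟨hlow, hup⟩
  rcases hy with hy | hy
  · obtain ⟨n, hn, hy⟩ := exists_Cset_of_mem_Xset hy
    obtain ⟨-, hyn, hyn'⟩ := (eq_pp_or_of_mem_Cset (by omega) hy).resolve_left hyp
    rcases le_or_gt n m with hnm | hmn
    · have : 1 / ((m : ℝ) + 1) ≤ 1 / ((n : ℝ) + 1) := by gcongr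
      linarith
    rcases (Nat.succ_le_of_lt hmn).eq_or_lt with rfl | hmn
    · linarith
    · have h1 := rayCoord_apex'_lt (n := n) (by omega)
      have h2 := one_div_succ_le_rayCoord_apex' (n := m + 1) (by omega)
      have : 1 / (n : ℝ) ≤ 1 / ((m + 1 : ℕ) + 1) := by gcongr; exact_mod_cast hmn
      linarith
  · have := rayCoord_apex'_pos (n := m + 1) (by omega)
    linarith [((eq_pp_or_of_mem_alphaSet hy).resolve_left hyp).2]

lemma exists_notMem_rayCoord_image {s : ℝ} (hs : 0 < s) :
    ∃ c ∈ Ioo 0 s, c ∉ rayCoord '' (Yset \ {pp}) := by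
  obtain ⟨m, hm⟩ := exists_nat_one_div_lt hs
  have hlt : rayCoord (apex' (m + 1)) < 1 / ((m : ℝ) + 1) := by
    simpa using rayCoord_apex'_lt (n := m + 1) (by omega)
  have hpos := rayCoord_apex'_pos (n := m + 1) (by omega)
  refine ⟨(rayCoord (apex' (m + 1)) + 1 / ((m : ℝ) + 1)) / 2,
    ⟨by linarith, by linarith⟩, ?_⟩
  rintro ⟨y, ⟨hy, hyp⟩, hc⟩
  exact rayCoord_notMem_Ioo hy hyp m (hc ▸ ⟨by linarith, by linarith⟩)

theorem notMem_Xset_of_joinedIn (x y : ℝ × ℝ) (h : JoinedIn (Yset \ {pp}) x y)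
    (hx : x ∉ Xset) : y ∉ Xset := by
  obtain ⟨γ, hγ⟩ := h
  have hxY : x ∈ Yset \ {pp} := γ.source ▸ hγ 0
  have hyY : y ∈ Yset \ {pp} := γ.target ▸ hγ 1
  have hx0 : rayCoord x = 0 :=
    ((eq_pp_or_of_mem_alphaSet (hxY.1.resolve_left hx)).resolve_left hxY.2).2
  have hconn : IsPreconnected (range (rayCoord ∘ γ)) :=
    isPreconnected_range (continuousOn_rayCoord.comp_continuous γ.continuous hγ)
  have hrange : range (rayCoord ∘ γ) ⊆ Iic 0 :=
    hconn.subset_Iic_of_exists_gap (K := rayCoord '' (Yset \ {pp}))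
      (range_subset_iff.2 fun t => mem_image_of_mem _ (hγ t)) ⟨0, by simp [hx0]⟩
      fun _ => exists_notMem_rayCoord_image
  intro hy
  exact (rayCoord_pos_of_mem_Xset hy hyY.2).not_ge (hrange ⟨1, by simp⟩)

/-- a loop in `X` based at `p` that bounds a disk in `Y` already
bounds a disk in `X`; consequently the inclusion-induced homomorphism
`j* : π₁(X,p) → π₁(Y,p)` is injective. -/
theorem disk_in_Y_gives_disk_in_X_and_injectivity :
    (∀ F : C(↥(Metric.closedBall (0 : ℝ × ℝ) 1), ℝ × ℝ),
      (∀ z, F z ∈ Yset) →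
      (∀ z : ↥(Metric.closedBall (0 : ℝ × ℝ) 1),
        (z : ℝ × ℝ) ∈ Metric.sphere (0 : ℝ × ℝ) 1 → F z ∈ Xset) →
      F ⟨(1, 0), basept_mem_disk⟩ = pp →
      ∃ G : C(↥(Metric.closedBall (0 : ℝ × ℝ) 1), ℝ × ℝ),
        (∀ z, G z ∈ Xset) ∧
        ∀ z : ↥(Metric.closedBall (0 : ℝ × ℝ) 1),
          (z : ℝ × ℝ) ∈ Metric.sphere (0 : ℝ × ℝ) 1 → G z = F z) ∧
    (∀ a b : Path pX pX,
      Joined (a.map jXY.continuous) (b.map jXY.continuous) → Joined a b) := by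
  refine ⟨fun F hFY hFX _ => ?_,
    fun a b => Path.joined_of_joined_map_inclusion X_sub_Y pp_mem_X notMem_Xset_of_joinedIn⟩
  have : LocallyPathConnectedSpace (Metric.closedBall (0 : ℝ × ℝ) 1) :=
    (convex_closedBall 0 1).locallyPathConnectedSpace
  exact ⟨⟨_, continuous_pinchOutside notMem_Xset_of_joinedIn F.continuous hFY⟩,
    fun _ => pinchOutside_mem pp_mem_X _, fun z hz => pinchOutside_of_mem (hFX z hz)⟩
end
end

section
/- Let X = ⋃_{n≥2} C_n (bouquet of triangle boundaries based at p = (0,0)), α the segment from (0,0) to (0,1), and Y = X ∪ α. Every loop β in Y based at p is path homotopic in Y to a loop γ with image contained in X. Consequently the inclusion-induced homomorphism j* : π₁(X,p) → π₁(Y,p) is surjective. -/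
open unitInterval Topology

noncomputable section

/-!
Collapse every excursion of the loop into `α` down the segment `α` to the basepoint, keeping it
fixed on `X ∖ α`. This is continuous along the loop because a path in `Y` cannot leave `α` at a
point above the basepoint: the triangles lie in sectors of slopes `x / y ∈ [1/n, 2/(2n-1)]`
separated by gaps that accumulate at the slope `0` of `α`, so on a connected neighbourhood the
slope of the path, which is `0` at a point of `α`, would have to cross a slope missing from `Y`.
-/

theorem OrderTopology.locallyConnectedSpace (α : Type*) [ConditionallyCompleteLinearOrder α]
    [TopologicalSpace α] [OrderTopology α] [DenselyOrdered α] : LocallyConnectedSpace α :=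
  locallyConnectedSpace_iff_connected_subsets.mpr fun _ _ hU =>
    let ⟨_, _, _, hmem, hsub⟩ := exists_Icc_mem_subset_of_mem_nhds hU
    ⟨_, hmem, isPreconnected_Icc, hsub⟩

instance : LocallyConnectedSpace I := OrderTopology.locallyConnectedSpace I

theorem Path.Homotopic.joined_s11 {X : Type*} [TopologicalSpace X] {x y : X} {p q : Path x y}
    (h : p.Homotopic q) : Joined p q := by
  obtain ⟨F⟩ := h
  exact ⟨⟨⟨F.eval, Path.continuous_uncurry_iff.mp F.continuous⟩, F.eval_zero, F.eval_one⟩⟩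

lemma mem_alphaSet_iff {q : ℝ × ℝ} : q ∈ alphaSet ↔ q.1 = 0 ∧ 0 ≤ q.2 ∧ q.2 ≤ 1 := by
  constructor
  · rintro ⟨a, b, ha, hb, hab, rfl⟩
    simp only [Prod.smul_mk, smul_eq_mul, mul_zero, mul_one, Prod.mk_add_mk, add_zero, zero_add,
      true_and]
    constructor <;> linarith
  · rintro ⟨h1, h2, h3⟩
    refine ⟨1 - q.2, q.2, by linarith, h2, by ring, ?_⟩
    ext <;> simp [h1]

lemma natCast_mul_le_ten_pow (n : ℕ) : (n : ℝ) * (2 * n ^ 2 - n + 2) ≤ 10 ^ (10 * n) := by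
  have key : n * (2 * n ^ 2 + 2) ≤ 10 ^ (10 * n) := by
    rcases Nat.eq_zero_or_pos n with rfl | hn
    · simp
    have h : n < 10 ^ n := Nat.lt_pow_self (by norm_num)
    have h10 : 10 ≤ 10 ^ n := Nat.le_self_pow hn.ne' 10
    calc n * (2 * n ^ 2 + 2) ≤ 4 * n ^ 3 := by nlinarith
      _ ≤ 10 * (10 ^ n) ^ 3 := by gcongr; omega
      _ ≤ (10 ^ n) ^ 10 := by
        calc 10 * (10 ^ n) ^ 3 ≤ 10 ^ n * (10 ^ n) ^ 3 := by gcongr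
          _ ≤ (10 ^ n) ^ 10 := by rw [← pow_succ']; exact Nat.pow_le_pow_right (by omega) (by omega)
      _ = 10 ^ (10 * n) := by rw [← pow_mul, mul_comm]
  calc (n : ℝ) * (2 * n ^ 2 - n + 2) ≤ n * (2 * n ^ 2 + 2) := by
        gcongr; linarith [Nat.cast_nonneg (α := ℝ) n]
    _ ≤ 10 ^ (10 * n) := by exact_mod_cast key

lemma Cset_subset_sector {n : ℕ} (hn : 0 < n) :
    Cset n ⊆ {q | q.2 ≤ n * q.1 ∧ (2 * n - 1) * q.1 ≤ 2 * q.2} := by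
  set S : Set (ℝ × ℝ) := {q | q.2 ≤ n * q.1 ∧ (2 * n - 1) * q.1 ≤ 2 * q.2}
  have hS : Convex ℝ S := by
    rintro x ⟨hx1, hx2⟩ y ⟨hy1, hy2⟩ a b ha hb -
    simp only [S, Set.mem_ofPred_eq, Prod.fst_add, Prod.snd_add, Prod.smul_fst, Prod.smul_snd,
      smul_eq_mul]
    constructor <;> nlinarith [mul_le_mul_of_nonneg_left hx1 ha, mul_le_mul_of_nonneg_left hy1 hb,
      mul_le_mul_of_nonneg_left hx2 ha, mul_le_mul_of_nonneg_left hy2 hb]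
  have hnR : (1 : ℝ) ≤ n := by exact_mod_cast hn
  have hp : pp ∈ S := by simp [S, pp]
  have ha : apex n ∈ S := by
    simp only [S, apex, Set.mem_ofPred_eq]
    field_simp
    constructor <;> linarith
  have ha' : apex' n ∈ S := by
    set ε : ℝ := ((10 : ℝ) ^ (10 * n))⁻¹
    have hε : 0 < ε := by positivity
    have hsmall : (n : ℝ) * (2 * n ^ 2 - n + 2) * ε ≤ 1 := by
      calc (n : ℝ) * (2 * n ^ 2 - n + 2) * ε ≤ 10 ^ (10 * n) * ε := by
            gcongr; exact natCast_mul_le_ten_pow n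
        _ = 1 := mul_inv_cancel₀ (by positivity)
    have hu : (n : ℝ) * (1 / n) = 1 := mul_one_div_cancel (by positivity)
    have hε' : (2 * n ^ 2 - n + 2) * ε ≤ 1 / n := by
      rw [le_div_iff₀ (by positivity)]; linarith
    simp only [S, apex', apex, Set.mem_ofPred_eq, Prod.fst_add, Prod.snd_add, Prod.smul_mk,
      smul_eq_mul]
    constructor
    · nlinarith
    · linear_combination 2 * hu + hε'
  exact Set.union_subset (Set.union_subset (hS.segment_subset hp ha) (hS.segment_subset ha ha'))
    (hS.segment_subset ha' hp)

lemma exists_sector_of_mem_Xset {q : ℝ × ℝ} (hq : q ∈ Xset) :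
    ∃ n : ℕ, 0 < n ∧ q.2 ≤ n * q.1 ∧ (2 * n - 1) * q.1 ≤ 2 * q.2 := by
  obtain ⟨n, hn, hqn⟩ := Set.mem_iUnion₂.mp hq
  have hn : 0 < n := by simp only [Set.mem_ofPred_eq] at hn; omega
  exact ⟨n, hn, Cset_subset_sector hn hqn⟩

lemma fst_nonneg_of_mem_Yset {q : ℝ × ℝ} (hq : q ∈ Yset) : 0 ≤ q.1 := by
  rcases hq with hX | hα
  · obtain ⟨n, -, hup, hlow⟩ := exists_sector_of_mem_Xset hX
    linarith
  · exact (mem_alphaSet_iff.mp hα).1.ge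

lemma mem_alphaSet_of_mem_Yset {q : ℝ × ℝ} (hq : q ∈ Yset) (h1 : q.1 = 0) : q ∈ alphaSet := by
  rcases hq with hX | hα
  · obtain ⟨n, -, hup, hlow⟩ := exists_sector_of_mem_Xset hX
    rw [h1, mul_zero] at hup hlow
    exact mem_alphaSet_iff.mpr ⟨h1, by linarith, by linarith⟩
  · exact hα

/-- Between the sectors of `C_{N+1}` and `C_{N+2}` lies the slope `4 / (4N + 5)`. -/
lemma slope_ne_of_mem_Yset (N : ℕ) {q : ℝ × ℝ} (hq : q ∈ Yset) :
    q.1 / q.2 ≠ 4 / (4 * N + 5) := by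
  intro hslope
  have hc : (0 : ℝ) < 4 / (4 * N + 5) := by positivity
  rcases hq with hX | hα
  · obtain ⟨n, hn, hup, hlow⟩ := exists_sector_of_mem_Xset hX
    have hnR : (1 : ℝ) ≤ n := by exact_mod_cast hn
    have h1 : 0 ≤ q.1 := fst_nonneg_of_mem_Yset (Or.inl hX)
    rcases (show 0 ≤ q.2 by nlinarith).eq_or_lt with h2 | h2
    · rw [← h2, div_zero] at hslope
      exact hc.ne hslope
    have hq1 : (4 * N + 5) * q.1 = 4 * q.2 := by
      field_simp at hslope; linarith
    have hq1pos : 0 < q.1 := by nlinarith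
    have hlo : 4 * N + 5 ≤ 4 * n := by
      have : ((4 * N + 5 : ℕ) : ℝ) ≤ (4 * n : ℕ) := by
        push_cast; nlinarith
      exact_mod_cast this
    have hhi : 4 * n ≤ 4 * N + 7 := by
      have : ((4 * n : ℕ) : ℝ) ≤ (4 * N + 7 : ℕ) := by
        push_cast; nlinarith
      exact_mod_cast this
    omega
  · rw [(mem_alphaSet_iff.mp hα).1, zero_div] at hslope
    exact hc.ne hslope

lemma exists_slope_not_mem_Yset {r : ℝ} (hr : 0 < r) :
    ∃ c, 0 < c ∧ c < r ∧ ∀ q ∈ Yset, q.1 / q.2 ≠ c := by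
  obtain ⟨N, hN⟩ := exists_nat_one_div_lt hr
  refine ⟨4 / (4 * N + 5), by positivity, lt_trans ?_ hN, fun q hq => slope_ne_of_mem_Yset N hq⟩
  rw [div_lt_div_iff₀ (by positivity) (by positivity)]
  linarith

lemma eventually_fst_eq_zero {T : Type*} [TopologicalSpace T] [LocallyConnectedSpace T]
    {f : T → ℝ × ℝ} (hf : Continuous f) (hfY : ∀ t, f t ∈ Yset) {t₀ : T}
    (h1 : (f t₀).1 = 0) (h2 : 0 < (f t₀).2) : ∀ᶠ t in 𝓝 t₀, (f t).1 = 0 := by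
  set U := {t | 0 < (f t).2}
  have hU : U ∈ 𝓝 t₀ := (hf.snd.isOpen_preimage _ isOpen_Ioi).mem_nhds h2
  set φ : T → ℝ := fun t => (f t).1 / (f t).2
  have hφ : ContinuousOn φ U := hf.fst.continuousOn.div hf.snd.continuousOn fun t ht => ht.ne'
  have hconn : IsPreconnected (φ '' connectedComponentIn U t₀) :=
    isPreconnected_connectedComponentIn.image φ (hφ.mono (connectedComponentIn_subset _ _))
  filter_upwards [connectedComponentIn_mem_nhds hU] with t ht
  by_contra hne
  have hpos : 0 < φ t := div_pos ((fst_nonneg_of_mem_Yset (hfY t)).lt_of_ne' hne)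
    (connectedComponentIn_subset U t₀ ht)
  obtain ⟨c, hc0, hct, hc⟩ := exists_slope_not_mem_Yset hpos
  have hφ₀ : φ t₀ = 0 := by simp [φ, h1]
  obtain ⟨t', -, ht'⟩ := hconn.Icc_subset ⟨t₀, mem_connectedComponentIn (mem_of_mem_nhds hU), hφ₀⟩
    ⟨t, ht, rfl⟩ ⟨hc0.le, hct.le⟩
  exact hc _ (hfY t') ht'

/-- On `Y` the condition `q.1 = 0` singles out `α`. The map `(s, q) ↦ collapseAlpha s q` is not
continuous on `I × Y` (points of `α` are limits of points of the triangles), only along maps into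
`Y` from locally connected spaces. -/
def collapseAlpha (s : ℝ) (q : ℝ × ℝ) : ℝ × ℝ := if q.1 = 0 then (1 - s) • q else q

lemma collapseAlpha_zero (q : ℝ × ℝ) : collapseAlpha 0 q = q := by
  simp [collapseAlpha]

lemma collapseAlpha_pp (s : ℝ) : collapseAlpha s pp = pp := by
  simp [collapseAlpha, pp]

lemma norm_collapseAlpha_le {s : ℝ} (hs : s ∈ I) (q : ℝ × ℝ) : ‖collapseAlpha s q‖ ≤ ‖q‖ := by
  unfold collapseAlpha
  split_ifs
  · rw [norm_smul, Real.norm_of_nonneg (by linarith [hs.2])]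
    exact mul_le_of_le_one_left (norm_nonneg q) (by linarith [hs.1])
  · exact le_rfl

lemma collapseAlpha_mem_Yset {s : ℝ} (hs : s ∈ I) {q : ℝ × ℝ} (hq : q ∈ Yset) :
    collapseAlpha s q ∈ Yset := by
  unfold collapseAlpha
  split_ifs with h1
  · have hstar : StarConvex ℝ 0 alphaSet := (convex_segment _ _).starConvex (left_mem_segment ℝ _ _)
    exact Or.inr (hstar.smul_mem (mem_alphaSet_of_mem_Yset hq h1) (by linarith [hs.2])
      (by linarith [hs.1]))
  · exact hq

lemma collapseAlpha_one_mem_Xset {q : ℝ × ℝ} (hq : q ∈ Yset) : collapseAlpha 1 q ∈ Xset := by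
  unfold collapseAlpha
  split_ifs with h1
  · rw [sub_self, zero_smul]
    exact pp_mem_X
  · exact hq.resolve_right fun hα => h1 (mem_alphaSet_iff.mp hα).1

lemma continuous_collapseAlpha_comp {T : Type*} [TopologicalSpace T] [LocallyConnectedSpace T]
    {f : T → ℝ × ℝ} (hf : Continuous f) (hfY : ∀ t, f t ∈ Yset) :
    Continuous fun p : I × T => collapseAlpha p.1 (f p.2) := by
  rw [continuous_iff_continuousAt]
  rintro ⟨s, t⟩
  by_cases h1 : (f t).1 = 0
  · obtain ⟨-, h2, -⟩ := mem_alphaSet_iff.mp (mem_alphaSet_of_mem_Yset (hfY t) h1)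
    rcases h2.eq_or_lt with h2 | h2
    · have hft : f t = 0 := Prod.ext h1 h2.symm
      have hlim : Filter.Tendsto (fun p : I × T => ‖f p.2‖) (𝓝 (s, t)) (𝓝 0) := by
        simpa [hft] using (hf.comp continuous_snd).norm.tendsto (s, t)
      have h0 : collapseAlpha s (f t) = 0 := by simp [collapseAlpha, hft]
      show Filter.Tendsto _ _ (𝓝 (collapseAlpha s (f t)))
      rw [h0]
      exact squeeze_zero_norm (fun p => norm_collapseAlpha_le p.1.2 _) hlim
    · have hev := (continuousAt_snd (p := (s, t))).eventually (eventually_fst_eq_zero hf hfY h1 h2)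
      refine ContinuousAt.congr (f := fun p : I × T => (1 - (p.1 : ℝ)) • f p.2) (by fun_prop) ?_
      filter_upwards [hev] with p hp
      simp [collapseAlpha, hp]
  · have hev : ∀ᶠ p : I × T in 𝓝 (s, t), (f p.2).1 ≠ 0 :=
      (hf.fst.comp continuous_snd).continuousAt.eventually_ne h1
    refine ContinuousAt.congr (f := fun p : I × T => f p.2) (by fun_prop) ?_
    filter_upwards [hev] with p hp
    simp [collapseAlpha, hp]

lemma continuous_collapseAlpha_path (β : Path pY pY) :
    Continuous fun p : I × I => collapseAlpha p.1 (β p.2) :=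
  continuous_collapseAlpha_comp (continuous_subtype_val.comp β.continuous) fun t => (β t).2

def collapsedLoop (β : Path pY pY) : Path pX pX where
  toFun t := ⟨collapseAlpha 1 (β t), collapseAlpha_one_mem_Xset (β t).2⟩
  continuous_toFun := ((continuous_collapseAlpha_path β).comp
    ((continuous_const (y := (1 : I))).prodMk continuous_id)).subtype_mk _
  source' := Subtype.ext <| by
    show collapseAlpha 1 (β 0) = pp
    rw [β.source]
    exact collapseAlpha_pp 1
  target' := Subtype.ext <| by
    show collapseAlpha 1 (β 1) = pp
    rw [β.target]
    exact collapseAlpha_pp 1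

def collapseHomotopy (β : Path pY pY) :
    Path.Homotopy β ((collapsedLoop β).map jXY.continuous) where
  toFun p := ⟨collapseAlpha p.1 (β p.2), collapseAlpha_mem_Yset p.1.2 (β p.2).2⟩
  continuous_toFun := (continuous_collapseAlpha_path β).subtype_mk _
  map_zero_left t := Subtype.ext (collapseAlpha_zero _)
  map_one_left t := rfl
  prop' s t ht := Subtype.ext <| by
    show collapseAlpha s (β t) = (β t : ℝ × ℝ)
    rcases ht with rfl | rfl
    · rw [β.source]; exact collapseAlpha_pp s
    · rw [β.target]; exact collapseAlpha_pp s

/-- every loop in `Y` based at `p` is path homotopic in `Y` to a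
loop with image in `X`; consequently the inclusion-induced homomorphism
`j* : π₁(X,p) → π₁(Y,p)` is surjective. -/
theorem loop_in_Y_homotopic_into_X_and_surjectivity :
    (∀ β : Path pY pY, ∃ γ : Path pY pY,
      β.Homotopic γ ∧ ∀ t : I, (γ t : ℝ × ℝ) ∈ Xset) ∧
    (∀ β : Path pY pY, ∃ a : Path pX pX,
      Joined β (a.map jXY.continuous)) :=
  ⟨fun β => ⟨_, ⟨collapseHomotopy β⟩, fun t => (collapsedLoop β t).2⟩,
    fun β => ⟨collapsedLoop β, Path.Homotopic.joined_s11 ⟨collapseHomotopy β⟩⟩⟩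
end
end

section
/- If K is a compact, connected, locally path connected subset of ℝ² containing (0,0) and contained in Y = (⋃_{n≥2} C_n) ∪ α, where α = {0} × [0,1] and C_n is the triangle boundary with vertices (0,0), (1/n,1), (1/n,1) + 10^{-10n}(n,−1), then K contains the point (1/n, 1) for at most finitely many n. -/
open unitInterval Topology

noncomputable section

/-!
If infinitely many apexes `(1/n, 1)` lie in `K`, they accumulate at `(0, 1)`, which is then in `K`
because `K` is closed. Local path connectedness at `(0, 1)` joins some apex `(1/n, 1)` to `(0, 1)`
by a path in `K` avoiding the origin. But `C_m \ {0}` lies in the sector of slopes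
`[m - 1/2, m]` (the third vertex is that close to the apex) and `α` on the vertical axis, so
`Y \ {0}` misses the line `y = (n + 1/4) x`, which separates `(1/n, 1)` from `(0, 1)`.
-/

open Filter

theorem eventually_joinedIn_inter {X : Type*} [TopologicalSpace X] {K V : Set X}
    [hK : LocallyPathConnectedSpace K] {x : X} (hx : x ∈ K) (hV : V ∈ 𝓝 x) :
    ∀ᶠ y in 𝓝 x, y ∈ K → JoinedIn (K ∩ V) y x := by
  have hV' : Subtype.val ⁻¹' V ∈ 𝓝 (⟨x, hx⟩ : K) := continuous_subtype_val.continuousAt hV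
  obtain ⟨W, hW, hWV⟩ := (mem_nhds_subtype K _ _).1 (pathComponentIn_mem_nhds hV')
  filter_upwards [hW] with y hyW hyK
  have := (hWV hyW : JoinedIn _ ⟨x, hx⟩ ⟨y, hyK⟩).map continuous_subtype_val
  rw [Subtype.image_preimage_coe] at this
  exact this.symm

def wedge (a b : ℝ) : Set (ℝ × ℝ) := {z | 0 ≤ z.1 ∧ a * z.1 ≤ z.2 ∧ z.2 ≤ b * z.1}

theorem convex_wedge (a b : ℝ) : Convex ℝ (wedge a b) := by
  rintro x ⟨hx₀, hxa, hxb⟩ y ⟨hy₀, hya, hyb⟩ s t hs ht -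
  simp only [wedge, Set.mem_ofPred_eq, Prod.fst_add, Prod.snd_add, Prod.smul_fst, Prod.smul_snd,
    smul_eq_mul]
  refine ⟨by positivity, ?_, ?_⟩ <;> nlinarith

theorem snd_ne_mul_fst_of_mem_wedge {a b s : ℝ} {z : ℝ × ℝ} (hz : z ∈ wedge a b) (hz₀ : z ≠ 0)
    (hs : s < a ∨ b < s) : z.2 ≠ s * z.1 := by
  obtain ⟨h₀, ha, hb⟩ := hz
  intro hzs
  rcases h₀.eq_or_lt with h₁ | h₁
  · exact hz₀ (Prod.ext h₁.symm (by simpa [← h₁] using hzs))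
  · rcases hs with hs | hs <;> nlinarith

theorem four_mul_pow_three_le_ten_pow {n : ℕ} (hn : 1 ≤ n) : 4 * n ^ 3 ≤ 10 ^ (10 * n) :=
  calc 4 * n ^ 3 ≤ 10 ^ (7 * n) * (10 ^ n) ^ 3 :=
        Nat.mul_le_mul (le_trans (by norm_num) (Nat.le_self_pow (by omega) 10))
          (Nat.pow_le_pow_left (Nat.lt_pow_self (by norm_num)).le 3)
    _ = 10 ^ (10 * n) := by ring

theorem apex_mem_wedge {n : ℕ} (hn : 1 ≤ n) : apex n ∈ wedge (n - 1 / 2) n := by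
  have : (0 : ℝ) < n := by exact_mod_cast hn
  simp only [apex, wedge, Set.mem_ofPred_eq]
  field_simp
  exact ⟨by simp, by linarith, le_rfl⟩

theorem apex'_mem_wedge {n : ℕ} (hn : 1 ≤ n) : apex' n ∈ wedge (n - 1 / 2) n := by
  have h₀ : (0 : ℝ) < n := by exact_mod_cast hn
  have h₁ : (1 : ℝ) ≤ n := by exact_mod_cast hn
  have hP : (4 * n ^ 3 : ℝ) ≤ 10 ^ (10 * n) := by exact_mod_cast four_mul_pow_three_le_ten_pow hn
  simp only [apex', apex, wedge, Set.mem_ofPred_eq, Prod.fst_add, Prod.snd_add, Prod.smul_fst,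
    Prod.smul_snd, smul_eq_mul]
  field_simp
  refine ⟨by rw [zero_mul, zero_mul]; positivity, ?_, by nlinarith⟩
  nlinarith

theorem Cset_subset_wedge {n : ℕ} (hn : 1 ≤ n) : Cset n ⊆ wedge (n - 1 / 2) n := by
  have hp : pp ∈ wedge (n - 1 / 2) n := by simp [pp, wedge]
  have hconv := convex_wedge (n - 1 / 2) n
  rintro z ((hz | hz) | hz)
  exacts [hconv.segment_subset hp (apex_mem_wedge hn) hz,
    hconv.segment_subset (apex_mem_wedge hn) (apex'_mem_wedge hn) hz,
    hconv.segment_subset (apex'_mem_wedge hn) hp hz]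

theorem fst_eq_zero_of_mem_alphaSet {z : ℝ × ℝ} (hz : z ∈ alphaSet) : z.1 = 0 := by
  obtain ⟨a, b, -, -, -, rfl⟩ := hz
  simp

theorem snd_ne_mul_fst_of_mem_Yset {z : ℝ × ℝ} (hz : z ∈ Yset) (hzp : z ≠ pp) (n : ℕ) :
    z.2 ≠ (n + 1 / 4) * z.1 := by
  rcases hz with hz | hz
  · obtain ⟨m, hm, hzm⟩ := Set.mem_iUnion₂.1 hz
    refine snd_ne_mul_fst_of_mem_wedge (Cset_subset_wedge (one_le_two.trans hm) hzm) hzp ?_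
    rcases le_or_gt m n with h | h
    · have : (m : ℝ) ≤ n := by exact_mod_cast h
      exact Or.inr (by linarith)
    · have : (n : ℝ) + 1 ≤ m := by exact_mod_cast h
      exact Or.inl (by linarith)
  · have h₁ := fst_eq_zero_of_mem_alphaSet hz
    rw [h₁, mul_zero]
    exact fun h₂ => hzp (Prod.ext h₁ h₂)

theorem not_joinedIn_apex_top {n : ℕ} (hn : 1 ≤ n) : ¬ JoinedIn (Yset \ {pp}) (apex n) (0, 1) := by
  rintro ⟨γ, hγ⟩
  have h₀ : (0 : ℝ) < n := by exact_mod_cast hn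
  let f : ℝ × ℝ → ℝ := fun z => z.2 - (n + 1 / 4) * z.1
  have hf : (0 : ℝ) ∈ Set.Icc (f (γ 0)) (f (γ 1)) := by
    rw [γ.source, γ.target]
    simp only [f, apex, Set.mem_Icc]
    field_simp
    constructor <;> linarith
  obtain ⟨t, ht⟩ := intermediate_value_univ 0 1 (f := f ∘ γ) (by fun_prop) hf
  exact snd_ne_mul_fst_of_mem_Yset (hγ t).1 (hγ t).2 n (sub_eq_zero.1 ht)

theorem tendsto_apex : Tendsto apex atTop (𝓝 (0, 1)) :=
  (tendsto_one_div_atTop_nhds_zero_nat).prodMk_nhds tendsto_const_nhds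

theorem finitely_many_apexes_of_peano_subcontinuum_general
    (K : Set (ℝ × ℝ)) (hcomp : IsCompact K)
    (hlpc : LocPathConnectedSpace ↥K)
    (hKY : K ⊆ Yset) :
    {n : ℕ | 2 ≤ n ∧ apex n ∈ K}.Finite := by
  by_contra hinf
  have hfreq : ∃ᶠ n in atTop, 2 ≤ n ∧ apex n ∈ K := Nat.frequently_atTop_iff_infinite.2 hinf
  have hqK : ((0 : ℝ), (1 : ℝ)) ∈ K :=
    hcomp.isClosed.mem_of_frequently_of_tendsto (hfreq.mono fun _ h => h.2) tendsto_apex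
  have hq : ((0 : ℝ), (1 : ℝ)) ≠ pp := by simp [pp]
  obtain ⟨n, ⟨hn, hnK⟩, hjoin⟩ := (hfreq.and_eventually (tendsto_apex.eventually
    (eventually_joinedIn_inter (hK := hlpc) hqK (isOpen_compl_singleton.mem_nhds hq)))).exists
  exact not_joinedIn_apex_top (by omega) ((hjoin hnK).mono (Set.sdiff_subset_sdiff_left hKY))

/-- a compact, connected, locally path connected subset `K` of `Y`
containing the origin contains the apex `(1/n, 1)` for at most finitely many
`n`. -/
theorem finitely_many_apexes_of_peano_subcontinuum
    (K : Set (ℝ × ℝ)) (hcomp : IsCompact K) (hconn : IsConnected K)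
    (hlpc : LocPathConnectedSpace ↥K) (h0 : ((0 : ℝ), (0 : ℝ)) ∈ K)
    (hKY : K ⊆ Yset) :
    {n : ℕ | 2 ≤ n ∧ apex n ∈ K}.Finite :=
  finitely_many_apexes_of_peano_subcontinuum_general K hcomp hlpc hKY
end
end
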